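/- arXiv:1902.07578 — 4 statements merged into one kernel-verified Lean document; each statement's English description precedes it below -/
import Mathlib

section
/- If f is a homeomorphism of a compact metric space such that the restriction of f to its non-wandering set Ω(f) is expansive with expansivity constant c>0, then for every x∈X the local stable set W^s_c(x) is contained in the stable set W^s(x), and the local unstable set W^u_c(x) is contained in the unstable set W^u(x). -/
open Filter Metric Set Topology

variable {X : Type*} [MetricSpace X]

/-- `f^k x` for `k : ℤ`, where `f` is a homeomorphism. -/
def iterZ (f : X ≃ₜ X) (k : ℤ) (x : X) : X :=
  if 0 ≤ k then (⇑f)^[k.toNat] x else (⇑f.symm)^[(-k).toNat] x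

/-- The classical shadowing property. -/
def Shadowing (f : X ≃ₜ X) : Prop :=
  ∀ ε > (0:ℝ), ∃ δ > (0:ℝ), ∀ x : ℤ → X,
    (∀ k : ℤ, dist (f (x k)) (x (k+1)) < δ) →
    ∃ z : X, ∀ k : ℤ, dist (iterZ f k z) (x k) < ε

/-- The L-shadowing property. -/
def LShadowing (f : X ≃ₜ X) : Prop :=
  ∀ ε > (0:ℝ), ∃ δ > (0:ℝ), ∀ x : ℤ → X,
    (∀ k : ℤ, dist (f (x k)) (x (k+1)) ≤ δ) →
    Tendsto (fun k : ℤ => dist (f (x k)) (x (k+1))) cofinite (nhds 0) →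
    ∃ z : X, (∀ k : ℤ, dist (iterZ f k z) (x k) ≤ ε) ∧
      Tendsto (fun k : ℤ => dist (iterZ f k z) (x k)) cofinite (nhds 0)

/-- The stable set of `x`. -/
def stableSet (f : X ≃ₜ X) (x : X) : Set X :=
  {y | Tendsto (fun n : ℕ => dist ((⇑f)^[n] x) ((⇑f)^[n] y)) atTop (nhds 0)}

/-- The unstable set of `x`. -/
def unstableSet (f : X ≃ₜ X) (x : X) : Set X := stableSet f.symm x

/-- The local stable set of size `ε` of `x`. -/
def localStable (f : X ≃ₜ X) (ε : ℝ) (x : X) : Set X :=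
  {y | ∀ n : ℕ, dist ((⇑f)^[n] x) ((⇑f)^[n] y) ≤ ε}

/-- The local unstable set of size `ε` of `x`. -/
def localUnstable (f : X ≃ₜ X) (ε : ℝ) (x : X) : Set X := localStable f.symm ε x

/-- `V^s_ε(x) = W^s(x) ∩ W^s_ε(x)`. -/
def Vs (f : X ≃ₜ X) (ε : ℝ) (x : X) : Set X := stableSet f x ∩ localStable f ε x

/-- `V^u_ε(x) = W^u(x) ∩ W^u_ε(x)`. -/
def Vu (f : X ≃ₜ X) (ε : ℝ) (x : X) : Set X := unstableSet f x ∩ localUnstable f ε x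

/-- The limit shadowing property. -/
def LimitShadowing (f : X ≃ₜ X) : Prop :=
  ∀ x : ℕ → X, Tendsto (fun k : ℕ => dist (f (x k)) (x (k+1))) atTop (nhds 0) →
    ∃ y : X, Tendsto (fun k : ℕ => dist ((⇑f)^[k] y) (x k)) atTop (nhds 0)

/-- The two-sided limit shadowing property. -/
def TwoSidedLimitShadowing (f : X ≃ₜ X) : Prop :=
  ∀ x : ℤ → X, Tendsto (fun k : ℤ => dist (f (x k)) (x (k+1))) cofinite (nhds 0) →
    ∃ y : X, Tendsto (fun k : ℤ => dist (iterZ f k y) (x k)) cofinite (nhds 0)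

/-- A non-wandering point. -/
def NonWandering (f : X ≃ₜ X) (x : X) : Prop :=
  ∀ U : Set X, IsOpen U → x ∈ U → ∃ k : ℕ, 0 < k ∧ ((⇑f)^[k] '' U ∩ U).Nonempty

/-- The non-wandering set. -/
def omegaSet (f : X ≃ₜ X) : Set X := {x | NonWandering f x}

/-- Topologically mixing. -/
def TopMixing (f : X ≃ₜ X) : Prop :=
  ∀ U V : Set X, IsOpen U → IsOpen V → U.Nonempty → V.Nonempty →
    ∃ n : ℕ, 0 < n ∧ ∀ k ≥ n, ((⇑f)^[k] '' U ∩ V).Nonempty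

/-- `f` is expansive on the set `A` (as a subsystem). -/
def ExpansiveOn (f : X ≃ₜ X) (A : Set X) : Prop :=
  ∃ c > (0:ℝ), ∀ x ∈ A, ∀ y ∈ A,
    (∀ k : ℤ, dist (iterZ f k x) (iterZ f k y) ≤ c) → x = y

/-- The dynamical ball `Γ_δ(x)`. -/
def dynBall (f : X ≃ₜ X) (δ : ℝ) (x : X) : Set X :=
  {y | ∀ k : ℤ, dist (iterZ f k x) (iterZ f k y) ≤ δ}

/-- There is a periodic `ε`-pseudo-orbit containing both `x` and `y`. -/
def ChainRel (f : X ≃ₜ X) (ε : ℝ) (x y : X) : Prop :=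
  ∃ (n : ℕ) (z : ℕ → X), 0 < n ∧ z 0 = x ∧ z n = x ∧ (∃ i ≤ n, z i = y) ∧
    ∀ i < n, dist (f (z i)) (z (i+1)) < ε

/-- The chain recurrent class of `x`. -/
def chainClass (f : X ≃ₜ X) (x : X) : Set X := {y | ∀ ε > (0:ℝ), ChainRel f ε x y}

/-- `h` is a semiconjugacy from `g` on `K` to the full shift on two symbols. -/
def SemiConjShift (g : X → X) (K : Set X) (h : X → (ℤ → Bool)) : Prop :=
  ContinuousOn h K ∧ (∀ s : ℤ → Bool, ∃ p ∈ K, h p = s) ∧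
    ∀ p ∈ K, h (g p) = fun i => h p (i + 1)

/-- `f` admits arbitrarily small topological semi-horseshoes inside `C`. -/
def SmallHorseshoes (f : X ≃ₜ X) (C : Set X) : Prop :=
  ∀ ε > (0:ℝ), ∃ N : ℕ, 1 ≤ N ∧ ∃ K : Set X, K ⊆ C ∧ IsCompact K ∧
    (⇑f)^[N] '' K = K ∧ (∀ k : ℤ, Metric.diam (iterZ f k '' K) ≤ ε) ∧
    ∃ h : X → (ℤ → Bool), SemiConjShift ((⇑f)^[N]) K h

/-!
Let `y ∈ W^s_c(x)` and let `(p, q)` be the limit of `(f^{n_j} x, f^{n_j} y)` along a strictly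
increasing sequence `n_j`. Both `p` and `q` are non-wandering: a neighbourhood `U` of `p` contains
`f^{n_j} x` and `f^{n_{j+1}} x` for large `j`, so `f^{n_{j+1} - n_j} U` meets `U`. Since each
`f^k` is continuous and `n_j + k ≥ 0` eventually, the bound `d(f^n x, f^n y) ≤ c` for `n ≥ 0`
passes to `d(f^k p, f^k q) ≤ c` for all `k ∈ ℤ`, and expansivity on `Ω(f)` forces `p = q`. By
compactness the pairs `(f^n x, f^n y)` thus accumulate only on the diagonal, so
`d(f^n x, f^n y) → 0`. The unstable case is the stable case for `f⁻¹`, which has the same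
non-wandering set.
-/

def ExpansiveOnWith (f : X ≃ₜ X) (A : Set X) (c : ℝ) : Prop :=
  ∀ x ∈ A, ∀ y ∈ A, (∀ k : ℤ, dist (iterZ f k x) (iterZ f k y) ≤ c) → x = y

lemma iterate_symm_iterate (f : X ≃ₜ X) (m : ℕ) (w : X) : (⇑f.symm)^[m] ((⇑f)^[m] w) = w :=
  (Function.LeftInverse.iterate f.symm_apply_apply m) w

lemma iterZ_iterate (f : X ≃ₜ X) {k : ℤ} {n : ℕ} (hk : 0 ≤ (n : ℤ) + k) (z : X) :
    iterZ f k ((⇑f)^[n] z) = (⇑f)^[((n : ℤ) + k).toNat] z := by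
  by_cases h : 0 ≤ k
  · rw [iterZ, if_pos h, ← Function.iterate_add_apply]
    congr 1
    omega
  · rw [iterZ, if_neg h]
    have hsplit : (⇑f)^[n] z = (⇑f)^[(-k).toNat] ((⇑f)^[((n : ℤ) + k).toNat] z) := by
      rw [← Function.iterate_add_apply]
      congr 1
      omega
    rw [hsplit, iterate_symm_iterate]

lemma continuous_iterZ (f : X ≃ₜ X) (k : ℤ) : Continuous (iterZ f k) := by
  unfold iterZ
  split_ifs
  · exact f.continuous.iterate _
  · exact f.symm.continuous.iterate _

lemma iterZ_symm (f : X ≃ₜ X) (k : ℤ) (z : X) : iterZ f.symm k z = iterZ f (-k) z := by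
  rcases lt_trichotomy k 0 with h | rfl | h
  · rw [iterZ, if_neg (by omega), iterZ, if_pos (by omega)]
    simp
  · simp [iterZ]
  · rw [iterZ, if_pos (by omega), iterZ, if_neg (by omega)]
    simp

lemma ExpansiveOnWith.symm {f : X ≃ₜ X} {A : Set X} {c : ℝ} (h : ExpansiveOnWith f A c) :
    ExpansiveOnWith f.symm A c := fun x hx y hy hxy =>
  h x hx y hy fun k => by simpa only [iterZ_symm, neg_neg] using hxy (-k)

lemma NonWandering.symm {f : X ≃ₜ X} {x : X} (h : NonWandering f x) : NonWandering f.symm x := by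
  intro U hU hx
  obtain ⟨k, hk, z, ⟨u, hu, rfl⟩, hzU⟩ := h U hU hx
  exact ⟨k, hk, u, ⟨_, hzU, iterate_symm_iterate f k u⟩, hu⟩

lemma omegaSet_symm (f : X ≃ₜ X) : omegaSet f.symm = omegaSet f :=
  Set.ext fun _ => ⟨fun h => h.symm, fun h => h.symm⟩

lemma mem_omegaSet_of_tendsto_iterate {f : X ≃ₜ X} {φ : ℕ → ℕ} (hφ : StrictMono φ) {w p : X}
    (h : Tendsto (fun j => (⇑f)^[φ j] w) atTop (𝓝 p)) : p ∈ omegaSet f := by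
  intro U hU hpU
  obtain ⟨J, hJ⟩ := eventually_atTop.mp (h.eventually (hU.mem_nhds hpU))
  have hlt : φ J < φ (J + 1) := hφ J.lt_succ_self
  refine ⟨φ (J + 1) - φ J, by omega, _, ⟨_, hJ J le_rfl, ?_⟩, hJ (J + 1) J.le_succ⟩
  rw [← Function.iterate_add_apply, Nat.sub_add_cancel hlt.le]

lemma dist_iterZ_le_of_tendsto_iterate {f : X ≃ₜ X} {φ : ℕ → ℕ} (hφ : Tendsto φ atTop atTop)
    {c : ℝ} {x y p q : X} (hy : y ∈ localStable f c x)
    (hp : Tendsto (fun j => (⇑f)^[φ j] x) atTop (𝓝 p))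
    (hq : Tendsto (fun j => (⇑f)^[φ j] y) atTop (𝓝 q)) (k : ℤ) :
    dist (iterZ f k p) (iterZ f k q) ≤ c := by
  have hlim := (((continuous_iterZ f k).tendsto p).comp hp).dist
    (((continuous_iterZ f k).tendsto q).comp hq)
  refine le_of_tendsto hlim ?_
  filter_upwards [hφ.eventually_ge_atTop k.natAbs] with j hj
  have hk : 0 ≤ (φ j : ℤ) + k := by omega
  simp only [Function.comp_apply, iterZ_iterate f hk]
  exact hy _

lemma localStable_subset_stableSet_of_expansiveOnWith [CompactSpace X] {f : X ≃ₜ X} {c : ℝ}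
    (hexp : ExpansiveOnWith f (omegaSet f) c) (x : X) : localStable f c x ⊆ stableSet f x := by
  intro y hy
  have hdiag : Tendsto (fun n => ((⇑f)^[n] x, (⇑f)^[n] y)) atTop (𝓝ˢ (diagonal X)) := by
    refine isCompact_univ.tendsto_nhdsSet_of_mapClusterPt (univ_mem' fun _ => mem_univ _) ?_
    rintro ⟨p, q⟩ - hpq
    obtain ⟨ψ, hψ, hlim⟩ := hpq.tendsto_subseq
    obtain ⟨hp, hq⟩ := (Prod.tendsto_iff _ _).1 hlim
    exact hexp p (mem_omegaSet_of_tendsto_iterate hψ hp) q (mem_omegaSet_of_tendsto_iterate hψ hq)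
      (dist_iterZ_le_of_tendsto_iterate hψ.tendsto_atTop hy hp hq)
  exact (continuous_dist.tendsto_nhdsSet_nhds fun z hz => dist_eq_zero.2 hz).comp hdiag

theorem localStable_subset_stableSet_general [CompactSpace X] (f : X ≃ₜ X) (c : ℝ)
    (hexp : ∀ x ∈ omegaSet f, ∀ y ∈ omegaSet f,
      (∀ k : ℤ, dist (iterZ f k x) (iterZ f k y) ≤ c) → x = y) :
    ∀ x : X, localStable f c x ⊆ stableSet f x ∧
      localUnstable f c x ⊆ unstableSet f x := by
  have hexp_symm : ExpansiveOnWith f.symm (omegaSet f.symm) c := by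
    rw [omegaSet_symm]
    exact ExpansiveOnWith.symm hexp
  exact fun x => ⟨localStable_subset_stableSet_of_expansiveOnWith hexp x,
    localStable_subset_stableSet_of_expansiveOnWith hexp_symm x⟩

/-- expansivity on the non-wandering set implies local stable sets
are contained in stable sets. -/
theorem localStable_subset_stableSet [CompactSpace X] (f : X ≃ₜ X) (c : ℝ) (hc : 0 < c)
    (hexp : ∀ x ∈ omegaSet f, ∀ y ∈ omegaSet f,
      (∀ k : ℤ, dist (iterZ f k x) (iterZ f k y) ≤ c) → x = y) :
    ∀ x : X, localStable f c x ⊆ stableSet f x ∧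
      localUnstable f c x ⊆ unstableSet f x :=
  localStable_subset_stableSet_general f c hexp
end

section
/- Let M and N be compact metric spaces, f: M → M and g: N → N homeomorphisms, and q: M → N a continuous, surjective, open map such that q ∘ f = g ∘ q. If f has the L-shadowing property, then g has the L-shadowing property. -/
open Filter Metric Set Topology

variable {X : Type*} [MetricSpace X]

section AuxFactor

variable {M : Type*} {N : Type*} [MetricSpace M] [MetricSpace N]

/-- Uniform continuity on a compact space, in `≤` form. -/
lemma aux_ucont [CompactSpace M] {q : M → N} (h : Continuous q) :
    ∀ ε > (0:ℝ), ∃ δ > (0:ℝ), ∀ a b : M, dist a b ≤ δ → dist (q a) (q b) ≤ ε := by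
  intro ε hε
  obtain ⟨δ, hδ, H⟩ := Metric.uniformContinuous_iff.mp
    (CompactSpace.uniformContinuous_of_continuous h) ε hε
  exact ⟨δ/2, by linarith, fun a b hab => le_of_lt (H (lt_of_le_of_lt hab (by linarith)))⟩

/-- An open continuous map from a compact metric space is "uniformly open": points
whose image is close to `y` have a nearby preimage of `y`. -/
lemma aux_unif_open [CompactSpace M] (q : M → N) (hcont : Continuous q) (hopen : IsOpenMap q) :
    ∀ η > (0:ℝ), ∃ δ > (0:ℝ), ∀ (x : M) (y : N), dist (q x) y ≤ δ →
      ∃ x', q x' = y ∧ dist x x' ≤ η := by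
  intro η hη
  by_contra hcon
  push_neg at hcon
  choose u v h1 h2 using fun n : ℕ => hcon (1/(n+1)) (by positivity)
  obtain ⟨x, -, φ, hφ, hx⟩ := isCompact_univ.tendsto_subseq (fun n => Set.mem_univ (u n))
  have hqux : Tendsto (fun n => q (u (φ n))) atTop (nhds (q x)) := (hcont.tendsto x).comp hx
  have hv : Tendsto (fun n => v (φ n)) atTop (nhds (q x)) := by
    rw [tendsto_iff_dist_tendsto_zero]
    apply squeeze_zero (g := fun n => 1/((φ n : ℝ)+1) + dist (q (u (φ n))) (q x))
      (fun n => dist_nonneg)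
    · intro n
      have h3 := h1 (φ n)
      calc dist (v (φ n)) (q x) ≤ dist (v (φ n)) (q (u (φ n))) + dist (q (u (φ n))) (q x) :=
            dist_triangle _ _ _
        _ ≤ 1/((φ n : ℝ)+1) + dist (q (u (φ n))) (q x) := by
            rw [dist_comm]; linarith
    · have h4 : Tendsto (fun n => 1/((φ n : ℝ)+1)) atTop (nhds 0) :=
        tendsto_one_div_add_atTop_nhds_zero_nat.comp hφ.tendsto_atTop
      simpa using h4.add (tendsto_iff_dist_tendsto_zero.mp hqux)
  have hop : IsOpen (q '' Metric.ball x (η/2)) := hopen _ Metric.isOpen_ball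
  have hmem : q x ∈ q '' Metric.ball x (η/2) :=
    ⟨x, Metric.mem_ball_self (by linarith), rfl⟩
  have h3 := hv.eventually (hop.eventually_mem hmem)
  have h4 := Metric.tendsto_nhds.mp hx (η/2) (by linarith)
  obtain ⟨n, hn3, hn4⟩ := (h3.and h4).exists
  obtain ⟨x', hx'ball, hx'q⟩ := hn3
  have h5 := h2 (φ n) x' hx'q
  have hd : dist (u (φ n)) x' ≤ dist (u (φ n)) x + dist x x' := dist_triangle _ _ _
  rw [Metric.mem_ball, dist_comm] at hx'ball
  simp only [Function.comp] at hn4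
  linarith

/-- Semiconjugacies commute with `iterZ`. -/
lemma aux_iterZ_semiconj (f : M ≃ₜ M) (g : N ≃ₜ N) (q : M → N)
    (h1 : ∀ x, q (f x) = g (q x)) (k : ℤ) (x : M) :
    q (iterZ f k x) = iterZ g k (q x) := by
  have h2 : ∀ x, q (f.symm x) = g.symm (q x) := by
    intro x
    have h3 := h1 (f.symm x)
    rw [f.apply_symm_apply] at h3
    rw [h3, g.symm_apply_apply]
  unfold iterZ
  split
  · exact Function.Semiconj.iterate_right h1 k.toNat x
  · exact Function.Semiconj.iterate_right h2 (-k).toNat x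

lemma aux_tendsto_zero {α : Type*} {l : Filter α} {u : α → ℝ} (h : ∀ a, 0 ≤ u a)
    (H : ∀ ε > (0:ℝ), ∀ᶠ a in l, u a ≤ ε) : Tendsto u l (nhds 0) := by
  rw [Metric.tendsto_nhds]
  intro ε hε
  filter_upwards [H (ε/2) (by linarith)] with a ha
  rw [Real.dist_eq, sub_zero, abs_of_nonneg (h a)]
  linarith

lemma aux_tendsto_le {α : Type*} {l : Filter α} {u : α → ℝ}
    (H : Tendsto u l (nhds 0)) : ∀ δ > (0:ℝ), ∀ᶠ a in l, u a ≤ δ := by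
  intro δ hδ
  filter_upwards [Metric.tendsto_nhds.mp H δ hδ] with a ha
  rw [Real.dist_eq, sub_zero] at ha
  exact le_of_lt (lt_of_le_of_lt (le_abs_self _) ha)

/-- A one-sided lifted pseudo-orbit, built from a lift-selection `L` and step map `F`. -/
def liftSeq (L : M → N → M) (F : M → M) (x0 : M) (w : ℕ → N) : ℕ → M
  | 0 => x0
  | n+1 => L (F (liftSeq L F x0 w n)) (w (n+1))

lemma liftSeq_q {q : M → N} {L : M → N → M} (hLq : ∀ x y, q (L x y) = y)
    (F : M → M) (x0 : M) (w : ℕ → N) (h0 : q x0 = w 0) :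
    ∀ n, q (liftSeq L F x0 w n) = w n := by
  intro n
  cases n with
  | zero => exact h0
  | succ n => exact hLq _ _

/-- The two-sided lifted pseudo-orbit. -/
noncomputable def liftZ (L : M → N → M) (f : M ≃ₜ M) (s : N → M) (y : ℤ → N) (k : ℤ) : M :=
  if 0 ≤ k then liftSeq L (⇑f) (s (y 0)) (fun m : ℕ => y m) k.toNat
  else liftSeq L (⇑f.symm) (s (y 0)) (fun m : ℕ => y (-m)) (-k).toNat

lemma liftZ_q {q : M → N} {L : M → N → M} (hLq : ∀ x y, q (L x y) = y)
    (f : M ≃ₜ M) {s : N → M} (hs : ∀ z, q (s z) = z) (y : ℤ → N) (k : ℤ) :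
    q (liftZ L f s y k) = y k := by
  unfold liftZ
  split
  · rename_i hk
    rw [liftSeq_q hLq _ _ _ (by simpa using hs (y 0))]
    exact congrArg y (Int.toNat_of_nonneg hk)
  · rename_i hk
    rw [liftSeq_q hLq _ _ _ (by simpa using hs (y 0))]
    exact congrArg y (by omega)

lemma liftZ_step_pos (L : M → N → M) (f : M ≃ₜ M) (s : N → M) (y : ℤ → N) (k : ℤ)
    (hk : 0 ≤ k) : liftZ L f s y (k+1) = L (f (liftZ L f s y k)) (y (k+1)) := by
  have h1 : (0:ℤ) ≤ k + 1 := by omega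
  have h2 : (k+1).toNat = k.toNat + 1 := by omega
  rw [liftZ, if_pos h1, h2, liftZ, if_pos hk]
  show L (f (liftSeq L (⇑f) (s (y 0)) (fun m : ℕ => y m) k.toNat)) (y ((k.toNat + 1 : ℕ) : ℤ))
    = _
  congr 2
  omega

lemma liftZ_step_neg (L : M → N → M) (f : M ≃ₜ M) (s : N → M) (y : ℤ → N) (k : ℤ)
    (hk : k < 0) : liftZ L f s y k = L (f.symm (liftZ L f s y (k+1))) (y k) := by
  have h1 : ¬ (0:ℤ) ≤ k := by omega
  obtain ⟨n, hn⟩ : ∃ n : ℕ, (-k).toNat = n + 1 := ⟨(-k).toNat - 1, by omega⟩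
  rw [liftZ, if_neg h1, hn]
  show L (f.symm (liftSeq L (⇑f.symm) (s (y 0)) (fun m : ℕ => y (-m)) n))
      (y (-((n + 1 : ℕ) : ℤ))) = _
  rcases eq_or_lt_of_le (by omega : k + 1 ≤ 0) with h2 | h2
  · have hn0 : n = 0 := by omega
    rw [liftZ, if_pos (le_of_eq h2.symm)]
    subst hn0
    have h3 : (k+1).toNat = 0 := by omega
    rw [h3]
    show L (f.symm (s (y 0))) (y (-((0 + 1 : ℕ) : ℤ))) = L (f.symm (s (y 0))) (y k)
    congr 2
    omega
  · rw [liftZ, if_neg (by omega)]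
    have h3 : (-(k+1)).toNat = n := by omega
    rw [h3]
    congr 2
    omega

end AuxFactor

/-- L-shadowing passes to factors by continuous, surjective, open
semiconjugacies. -/
theorem lshadowing_of_factor {M N : Type*} [MetricSpace M] [MetricSpace N]
    [CompactSpace M] [CompactSpace N]
    (f : M ≃ₜ M) (g : N ≃ₜ N) (q : M → N)
    (hcont : Continuous q) (hsurj : Function.Surjective q) (hopen : IsOpenMap q)
    (hcomm : q ∘ ⇑f = ⇑g ∘ q) (hf : LShadowing f) : LShadowing g := by
  have hc1 : ∀ x, q (f x) = g (q x) := fun x => congrFun hcomm x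
  have hc2 : ∀ x, q (f.symm x) = g.symm (q x) := by
    intro x
    have h3 := hc1 (f.symm x)
    rw [f.apply_symm_apply] at h3
    rw [h3, g.symm_apply_apply]
  have hiter := aux_iterZ_semiconj f g q hc1
  -- choose distance-minimizing lifts
  have hL0 : ∀ (x : M) (y : N), ∃ x', q x' = y ∧ ∀ x'', q x'' = y → dist x x' ≤ dist x x'' := by
    intro x y
    obtain ⟨x0, hx0⟩ := hsurj y
    have hcpt : IsCompact (q ⁻¹' {y}) := (isClosed_singleton.preimage hcont).isCompact
    obtain ⟨x', hx', hmin⟩ := hcpt.exists_isMinOn ⟨x0, hx0⟩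
      ((continuous_const.dist continuous_id).continuousOn)
    exact ⟨x', hx', fun x'' h'' => hmin h''⟩
  choose L hLq hLmin using hL0
  choose s hs using hsurj
  -- the key lifting estimate
  have keyL : ∀ η > (0:ℝ), ∃ δ > (0:ℝ), ∀ (x : M) (y : N),
      dist (q x) y ≤ δ → dist x (L x y) ≤ η := by
    intro η hη
    obtain ⟨δ, hδ, H⟩ := aux_unif_open q hcont hopen η hη
    refine ⟨δ, hδ, fun x y hxy => ?_⟩
    obtain ⟨x', hx'q, hx'd⟩ := H x y hxy
    exact le_trans (hLmin x y x' hx'q) hx'd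
  have hqX : ∀ (y : ℤ → N) (k : ℤ), q (liftZ L f s y k) = y k :=
    fun y k => liftZ_q hLq f hs y k
  -- errors of the lifted pseudo-orbit are controlled by the errors downstairs
  have keyErr : ∀ η > (0:ℝ), ∃ δ > (0:ℝ), ∀ (y : ℤ → N) (k : ℤ),
      dist (g (y k)) (y (k+1)) ≤ δ →
      dist (f (liftZ L f s y k)) (liftZ L f s y (k+1)) ≤ η := by
    intro η hη
    obtain ⟨δ₁, hδ₁, H₁⟩ := keyL η hη
    obtain ⟨δf, hδf, Hf⟩ := aux_ucont f.continuous η hη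
    obtain ⟨δ₂, hδ₂, H₂⟩ := keyL δf hδf
    obtain ⟨δ₃, hδ₃, H₃⟩ := aux_ucont g.symm.continuous δ₂ hδ₂
    refine ⟨min δ₁ δ₃, lt_min hδ₁ hδ₃, ?_⟩
    intro y k hk
    rcases le_or_gt 0 k with hk0 | hk0
    · rw [liftZ_step_pos L f s y k hk0]
      apply H₁
      rw [hc1, hqX]
      exact le_trans hk (min_le_left _ _)
    · rw [liftZ_step_neg L f s y k hk0]
      set u := f.symm (liftZ L f s y (k+1)) with hu
      have hfu : liftZ L f s y (k+1) = f u := (f.apply_symm_apply _).symm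
      rw [hfu]
      apply Hf
      rw [dist_comm]
      apply H₂
      have hqu : q u = g.symm (y (k+1)) := by rw [hu, hc2, hqX]
      rw [hqu]
      have h5 : dist (y (k+1)) (g (y k)) ≤ δ₃ := by
        rw [dist_comm]; exact le_trans hk (min_le_right _ _)
      have h6 := H₃ _ _ h5
      rwa [g.symm_apply_apply] at h6
  -- main argument
  intro ε hε
  obtain ⟨ε', hε', Hq⟩ := aux_ucont hcont ε hε
  obtain ⟨δ', hδ', Hshad⟩ := hf ε' hε'
  obtain ⟨δg, hδg, Herr⟩ := keyErr δ' hδ'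
  refine ⟨δg, hδg, ?_⟩
  intro y hyb hyt
  set x : ℤ → M := liftZ L f s y with hx
  have hbound : ∀ k, dist (f (x k)) (x (k+1)) ≤ δ' := fun k => Herr y k (hyb k)
  have htend : Tendsto (fun k : ℤ => dist (f (x k)) (x (k+1))) cofinite (nhds 0) := by
    apply aux_tendsto_zero (fun k => dist_nonneg)
    intro η hη
    obtain ⟨δ, hδ, H⟩ := keyErr η hη
    filter_upwards [aux_tendsto_le hyt δ hδ] with k hk
    exact H y k hk
  obtain ⟨z, hz1, hz2⟩ := Hshad x hbound htend
  refine ⟨q z, ?_, ?_⟩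
  · intro k
    have h7 := Hq _ _ (hz1 k)
    rwa [hiter, hqX] at h7
  · apply aux_tendsto_zero (fun k => dist_nonneg)
    intro η hη
    obtain ⟨δ, hδ, H⟩ := aux_ucont hcont η hη
    filter_upwards [aux_tendsto_le hz2 δ hδ] with k hk
    have h8 := H _ _ hk
    rwa [hiter, hqX] at h8
end

section
/- Let f be a homeomorphism of a compact metric space X satisfying: (1) for every ε>0 there is δ>0 such that d(a,b)<δ implies W^s_ε(a) ∩ W^u_ε(b) ≠ ∅, and (2) for every x∈X there is c>0 such that W^s_c(x)={x}. Then X is finite. -/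
open Filter Metric Set Topology

variable {X : Type*} [MetricSpace X]

/-
Local product structure with trivial local stable sets makes `f⁻¹` Lyapunov stable at every
point: the bracket point of `x` and a nearby `y` lies in `W^s_c(x) = {x}`, so `x ∈ W^u_ε(y)`.
By compactness the backward iterates are uniformly equicontinuous, so
`D(x, y) = sup_{n ≥ 0} d(f⁻ⁿ x, f⁻ⁿ y)` is a metric uniformly equivalent to `d` for which `f` is
non-contracting. A recurrence argument in `X × X` shows that such a map cannot expand `D` either,
so the forward iterates are equicontinuous too, `W^s_c(x)` is a neighbourhood of `x`, every point
is isolated and the compact space `X` is finite.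
-/

open Function

noncomputable def orbitSupDist (g : X → X) (x y : X) : ℝ :=
  ⨆ n : ℕ, dist (g^[n] x) (g^[n] y)

section OrbitSupDist

theorem dist_iterate_le_orbitSupDist [BoundedSpace X] (g : X → X) (x y : X) (n : ℕ) :
    dist (g^[n] x) (g^[n] y) ≤ orbitSupDist g x y := by
  refine le_ciSup (f := fun n => dist (g^[n] x) (g^[n] y)) ⟨diam (univ : Set X), ?_⟩ n
  rintro _ ⟨m, rfl⟩
  exact dist_le_diam_of_mem BoundedSpace.bounded_univ (mem_univ _) (mem_univ _)

theorem dist_le_orbitSupDist [BoundedSpace X] (g : X → X) (x y : X) :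
    dist x y ≤ orbitSupDist g x y :=
  dist_iterate_le_orbitSupDist g x y 0

theorem orbitSupDist_le {g : X → X} {ε : ℝ} {x y : X}
    (h : ∀ n : ℕ, dist (g^[n] x) (g^[n] y) ≤ ε) : orbitSupDist g x y ≤ ε :=
  ciSup_le h

theorem orbitSupDist_comm (g : X → X) (x y : X) : orbitSupDist g x y = orbitSupDist g y x := by
  simp only [orbitSupDist, dist_comm]

theorem orbitSupDist_triangle [BoundedSpace X] (g : X → X) (x y z : X) :
    orbitSupDist g x z ≤ orbitSupDist g x y + orbitSupDist g y z :=
  orbitSupDist_le fun n => (dist_triangle _ _ _).trans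
    (add_le_add (dist_iterate_le_orbitSupDist g x y n) (dist_iterate_le_orbitSupDist g y z n))

theorem orbitSupDist_iterate_le [BoundedSpace X] (g : X → X) (x y : X) (m : ℕ) :
    orbitSupDist g (g^[m] x) (g^[m] y) ≤ orbitSupDist g x y :=
  orbitSupDist_le fun n => by
    simpa only [← iterate_add_apply] using dist_iterate_le_orbitSupDist g x y (n + m)

theorem orbitSupDist_le_orbitSupDist_iterate [BoundedSpace X] {f g : X → X}
    (hgf : LeftInverse g f) (x y : X) (n : ℕ) :
    orbitSupDist g x y ≤ orbitSupDist g (f^[n] x) (f^[n] y) := by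
  simpa only [hgf.iterate n _] using orbitSupDist_iterate_le g (f^[n] x) (f^[n] y) n

theorem UniformEquicontinuous.exists_orbitSupDist_le {g : X → X}
    (hg : UniformEquicontinuous fun n : ℕ => g^[n]) {ε : ℝ} (hε : 0 < ε) :
    ∃ δ > 0, ∀ x y : X, dist x y < δ → orbitSupDist g x y ≤ ε := by
  obtain ⟨δ, hδ, h⟩ := Metric.uniformEquicontinuous_iff.1 hg ε hε
  exact ⟨δ, hδ, fun x y hxy => orbitSupDist_le fun n => (h x y hxy n).le⟩

variable [CompactSpace X] {f g : X → X}

theorem exists_orbitSupDist_iterate_le (hgf : LeftInverse g f)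
    (hg : UniformEquicontinuous fun n : ℕ => g^[n]) (x y : X) {ε : ℝ} (hε : 0 < ε) :
    ∃ m ≥ 1, orbitSupDist g (f^[m] x) x ≤ ε ∧ orbitSupDist g (f^[m] y) y ≤ ε := by
  obtain ⟨δ, hδ, hD⟩ := hg.exists_orbitSupDist_le hε
  obtain ⟨_, ψ, hψ, hconv⟩ := CompactSpace.tendsto_subseq fun n => (f^[n] x, f^[n] y)
  obtain ⟨N, hN⟩ := Metric.cauchySeq_iff.1 hconv.cauchySeq δ hδ
  have hclose := hN (N + 1) (by omega) N le_rfl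
  rw [Prod.dist_eq, max_lt_iff] at hclose
  have hlt := hψ (Nat.lt_add_one N)
  have hψN : ψ N + (ψ (N + 1) - ψ N) = ψ (N + 1) := by omega
  refine ⟨ψ (N + 1) - ψ N, by omega, ?_, ?_⟩
  all_goals
    refine (orbitSupDist_le_orbitSupDist_iterate hgf _ _ (ψ N)).trans (hD _ _ ?_)
    rw [← iterate_add_apply, hψN]
  exacts [hclose.1, hclose.2]

theorem orbitSupDist_apply_le (hgf : LeftInverse g f)
    (hg : UniformEquicontinuous fun n : ℕ => g^[n]) (x y : X) :
    orbitSupDist g (f x) (f y) ≤ orbitSupDist g x y := by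
  refine le_of_forall_pos_le_add fun ε hε => ?_
  obtain ⟨m, hm, hx, hy⟩ := exists_orbitSupDist_iterate_le hgf hg x y (half_pos hε)
  calc orbitSupDist g (f x) (f y)
      ≤ orbitSupDist g (f^[m] x) (f^[m] y) := by
        rw [← Nat.sub_add_cancel hm, iterate_succ_apply, iterate_succ_apply]
        exact orbitSupDist_le_orbitSupDist_iterate hgf (f x) (f y) (m - 1)
    _ ≤ orbitSupDist g x y + ε := by
        have hxy := orbitSupDist_triangle g (f^[m] x) x (f^[m] y)
        have hyy := orbitSupDist_triangle g x y (f^[m] y)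
        rw [orbitSupDist_comm g y] at hyy
        linarith

theorem uniformEquicontinuous_iterate_of_leftInverse (hgf : LeftInverse g f)
    (hg : UniformEquicontinuous fun n : ℕ => g^[n]) :
    UniformEquicontinuous fun n : ℕ => f^[n] := by
  have hiter (n : ℕ) (x y : X) : orbitSupDist g (f^[n] x) (f^[n] y) ≤ orbitSupDist g x y := by
    induction n generalizing x y with
    | zero => rfl
    | succ n ih =>
      simpa only [iterate_succ_apply] using ih (f x) (f y) |>.trans
        (orbitSupDist_apply_le hgf hg x y)
  refine Metric.uniformEquicontinuous_iff.2 fun ε hε => ?_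
  obtain ⟨δ, hδ, hD⟩ := hg.exists_orbitSupDist_le (half_pos hε)
  exact ⟨δ, hδ, fun x y hxy n => calc
    dist (f^[n] x) (f^[n] y) ≤ orbitSupDist g x y :=
      (dist_le_orbitSupDist g _ _).trans (hiter n x y)
    _ ≤ ε / 2 := hD x y hxy
    _ < ε := half_lt_self hε⟩

end OrbitSupDist

theorem equicontinuousAt_iterate_symm_of_localProduct (f : X ≃ₜ X)
    (hprod : ∀ ε > (0:ℝ), ∃ δ > (0:ℝ), ∀ a b : X,
      dist a b < δ → (localStable f ε a ∩ localUnstable f ε b).Nonempty)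
    {x : X} {c : ℝ} (hc : 0 < c) (hx : localStable f c x = {x}) :
    EquicontinuousAt (fun n : ℕ => (⇑f.symm)^[n]) x := by
  refine Metric.equicontinuousAt_iff.2 fun ε hε => ?_
  obtain ⟨δ, hδ, hδprod⟩ := hprod (min (ε / 2) c) (lt_min (half_pos hε) hc)
  refine ⟨δ, hδ, fun y hy n => ?_⟩
  obtain ⟨z, hzs, hzu⟩ := hδprod x y (by rwa [dist_comm])
  have hzx : z = x := by
    have hz : z ∈ localStable f c x := fun m => (hzs m).trans (min_le_right _ _)
    rwa [hx, mem_singleton_iff] at hz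
  subst hzx
  calc dist ((⇑f.symm)^[n] z) ((⇑f.symm)^[n] y)
      = dist ((⇑f.symm)^[n] y) ((⇑f.symm)^[n] z) := dist_comm _ _
    _ ≤ min (ε / 2) c := hzu n
    _ < ε := (min_le_left _ _).trans_lt (half_lt_self hε)

theorem isOpen_singleton_of_localStable_eq_singleton {f : X ≃ₜ X} {x : X} {c : ℝ}
    (hf : EquicontinuousAt (fun n : ℕ => (⇑f)^[n]) x) (hc : 0 < c)
    (hx : localStable f c x = {x}) : IsOpen ({x} : Set X) := by
  obtain ⟨δ, hδ, hball⟩ := Metric.equicontinuousAt_iff.1 hf c hc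
  refine Metric.isOpen_singleton_iff.2 ⟨δ, hδ, fun y hy => ?_⟩
  have hy : y ∈ localStable f c x := fun n => (hball y hy n).le
  rwa [hx, mem_singleton_iff] at hy

/-- local product structure plus trivial local stable sets force
the space to be finite. -/
theorem finite_of_localProduct_trivialStable [CompactSpace X] (f : X ≃ₜ X)
    (h1 : ∀ ε > (0:ℝ), ∃ δ > (0:ℝ), ∀ a b : X,
      dist a b < δ → (localStable f ε a ∩ localUnstable f ε b).Nonempty)
    (h2 : ∀ x : X, ∃ c > (0:ℝ), localStable f c x = {x}) :
    Finite X := by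
  have hback : UniformEquicontinuous fun n : ℕ => (⇑f.symm)^[n] :=
    CompactSpace.uniformEquicontinuous_of_equicontinuous fun x =>
      let ⟨_, hc, hx⟩ := h2 x
      equicontinuousAt_iterate_symm_of_localProduct f h1 hc hx
  have hfwd : UniformEquicontinuous fun n : ℕ => (⇑f)^[n] :=
    uniformEquicontinuous_iterate_of_leftInverse f.symm_apply_apply hback
  have : DiscreteTopology X := discreteTopology_iff_isOpen_singleton.2 fun x => by
    obtain ⟨c, hc, hx⟩ := h2 x
    exact isOpen_singleton_of_localStable_eq_singleton (hfwd.equicontinuous x) hc hx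
  exact finite_of_compact_of_discrete
end

section
/- If a homeomorphism f of a compact metric space X is positively finite-expansive and has the shadowing property, then X is a finite set. -/
open Filter Metric Set Topology

variable {X : Type*} [MetricSpace X]

section AuxPeriodicProof

variable (f : X ≃ₜ X)

private lemma iterZ_natCast' (n : ℕ) (x : X) : iterZ f n x = (⇑f)^[n] x := by
  simp [iterZ]

private lemma iterZ_zero' (x : X) : iterZ f 0 x = x := by simp [iterZ]

private lemma iterZ_neg_natCast' (n : ℕ) (x : X) :
    iterZ f (-(n:ℤ)) x = (⇑f.symm)^[n] x := by
  rcases Nat.eq_zero_or_pos n with h | h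
  · subst h; simp [iterZ]
  · have h1 : ¬ (0 ≤ -(n:ℤ)) := by omega
    simp [iterZ, h1]; intro h0; omega

private lemma iterZ_succ' (k : ℤ) (x : X) :
    iterZ f (k + 1) x = f (iterZ f k x) := by
  rcases le_or_gt 0 k with hk | hk
  · lift k to ℕ using hk
    have : (k : ℤ) + 1 = ((k + 1 : ℕ) : ℤ) := by push_cast; ring
    rw [this, iterZ_natCast', iterZ_natCast', Function.iterate_succ_apply']
  · obtain ⟨b, hb⟩ : ∃ b : ℕ, k = -((b : ℤ) + 1) := by
      refine ⟨(-k - 1).toNat, ?_⟩; omega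
    subst hb
    have e1 : (-((b:ℤ) + 1) + 1) = -(b:ℤ) := by ring
    have e2 : (-((b:ℤ) + 1)) = -(((b+1:ℕ)):ℤ) := by push_cast; ring
    rw [e1, e2, iterZ_neg_natCast', iterZ_neg_natCast', Function.iterate_succ_apply',
      f.apply_symm_apply]

private lemma iterZ_add_nat' (k : ℤ) (j : ℕ) (x : X) :
    iterZ f (k + j) x = (⇑f)^[j] (iterZ f k x) := by
  induction j with
  | zero => simp [iterZ_zero']
  | succ j ih =>
    have : k + ((j + 1 : ℕ) : ℤ) = (k + j) + 1 := by push_cast; ring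
    rw [this, iterZ_succ', ih, Function.iterate_succ_apply']

private lemma iterate_symm_cancel' (n : ℕ) (x : X) :
    (⇑f)^[n] ((⇑f.symm)^[n] x) = x := by
  induction n with
  | zero => rfl
  | succ n ih =>
    rw [Function.iterate_succ_apply' (⇑f.symm), Function.iterate_succ_apply (⇑f),
      f.apply_symm_apply]; exact ih

private lemma iterate_eq_symm_iterate' {N : ℕ} {a : X} (ha : (⇑f)^[N] a = a)
    (t s : ℕ) (hst : s + t = N * t) : (⇑f)^[t] a = (⇑f.symm)^[s] a := by
  have h1 : (⇑f)^[s] ((⇑f)^[t] a) = a := by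
    rw [← Function.iterate_add_apply, hst, Function.iterate_mul]
    exact Function.iterate_fixed ha t
  have h2 : (⇑f)^[s] ((⇑f.symm)^[s] a) = a := iterate_symm_cancel' f s a
  exact (f.injective.iterate s) (h1.trans h2.symm)

/-- A shadow of a pseudo-orbit which is eventually forward periodic is a
periodic point, given positive finite expansivity. -/
private lemma shadow_periodic' {c : ℝ}
    (hfin : ∀ x : X, (localStable f c x).Finite)
    (z : X) (w : ℤ → X) (n T : ℤ) (hn : 0 ≤ n) (hT : 1 ≤ T)
    (hper : ∀ k : ℤ, n ≤ k → w (k + T) = w k)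
    (hshz : ∀ k : ℤ, dist (iterZ f k z) (w k) ≤ c / 2) :
    ∃ N : ℕ, 1 ≤ N ∧ (⇑f)^[N] z = z := by
  have hperN : ∀ (a : ℕ) (k : ℤ), n ≤ k → w (k + a * T) = w k := by
    intro a
    induction a with
    | zero => intro k _; simp
    | succ a ih =>
      intro k hk
      have e : k + ((a : ℤ) + 1) * T = (k + a * T) + T := by ring
      have hk2 : n ≤ k + a * T := by
        have : 0 ≤ (a : ℤ) * T := mul_nonneg (by positivity) (by omega)
        omega
      rw [show ((a + 1 : ℕ) : ℤ) = (a : ℤ) + 1 by push_cast; ring, e,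
        hper _ hk2, ih k hk]
  have hmem : ∀ a : ℕ, iterZ f (n + a * T) z ∈ localStable f c (iterZ f n z) := by
    intro a j
    have e1 : (⇑f)^[j] (iterZ f n z) = iterZ f (n + j) z := (iterZ_add_nat' f n j z).symm
    have e2 : (⇑f)^[j] (iterZ f (n + a * T) z) = iterZ f (n + a * T + j) z :=
      (iterZ_add_nat' f (n + a * T) j z).symm
    have e3 : w (n + a * T + j) = w (n + j) := by
      have := hperN a (n + j) (by omega)
      rw [show n + a * T + (j : ℤ) = n + (j : ℤ) + a * T by ring, this]
    calc dist ((⇑f)^[j] (iterZ f n z)) ((⇑f)^[j] (iterZ f (n + a * T) z))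
        = dist (iterZ f (n + j) z) (iterZ f (n + a * T + j) z) := by rw [e1, e2]
      _ ≤ dist (iterZ f (n + j) z) (w (n + j))
          + dist (w (n + a * T + j)) (iterZ f (n + a * T + j) z) := by
            rw [e3]; exact dist_triangle _ _ _
      _ ≤ c / 2 + c / 2 := by
            gcongr
            · exact hshz _
            · rw [dist_comm]; exact hshz _
      _ = c := by ring
  haveI : Finite ↥(localStable f c (iterZ f n z)) := (hfin _).to_subtype
  obtain ⟨a, b, hab, hg⟩ := Finite.exists_ne_map_eq_of_infinite
    (fun a : ℕ => (⟨iterZ f (n + a * T) z, hmem a⟩ : ↥(localStable f c (iterZ f n z))))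
  have key : ∀ a b : ℕ, a < b → iterZ f (n + a * T) z = iterZ f (n + b * T) z →
      ∃ N : ℕ, 1 ≤ N ∧ (⇑f)^[N] z = z := by
    intro a b hlt heq
    set e : ℕ := ((b - a) * T).toNat with he
    have hTpos : (0:ℤ) < T := by omega
    have heZ : (e : ℤ) = ((b : ℤ) - a) * T := by
      rw [he, Int.toNat_of_nonneg]
      exact mul_nonneg (by omega) (by omega)
    have he1 : 1 ≤ e := by
      have : (1:ℤ) ≤ ((b:ℤ) - a) * T := by nlinarith [show (1:ℤ) ≤ (b:ℤ) - a by omega]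
      omega
    have hsum : n + (b:ℤ) * T = (n + a * T) + e := by rw [heZ]; ring
    have h4 : (⇑f)^[e] (iterZ f (n + a * T) z) = iterZ f (n + a * T) z := by
      rw [← iterZ_add_nat', ← hsum, ← heq]
    set p : ℕ := (n + a * T).toNat with hp
    have hpZ : ((p : ℕ) : ℤ) = n + a * T := by
      rw [hp, Int.toNat_of_nonneg]
      have : 0 ≤ (a : ℤ) * T := mul_nonneg (by positivity) (by omega)
      omega
    have h5 : iterZ f (n + a * T) z = (⇑f)^[p] z := by
      rw [← hpZ, iterZ_natCast']
    rw [h5] at h4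
    have h6 : (⇑f)^[p] ((⇑f)^[e] z) = (⇑f)^[p] z := by
      rw [← Function.iterate_add_apply, add_comm, Function.iterate_add_apply, h4]
    exact ⟨e, he1, (f.injective.iterate p) h6⟩
  rcases hab.lt_or_gt with hlt | hlt
  · exact key a b hlt (congrArg Subtype.val hg)
  · exact key b a hlt (congrArg Subtype.val hg.symm)


private lemma periodic_finite' [CompactSpace X] {c : ℝ} (hc : 0 < c) (f : X ≃ₜ X)
    (hfin : ∀ x : X, (localStable f c x).Finite) (hsh : Shadowing f) :
    {p : X | ∃ N : ℕ, 1 ≤ N ∧ (⇑f)^[N] p = p}.Finite := by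
  by_contra hPfin
  have hP : {p : X | ∃ N : ℕ, 1 ≤ N ∧ (⇑f)^[N] p = p}.Infinite := hPfin
  obtain ⟨δ1, hδ1, hδ1sh⟩ := hsh (c / 2) (by positivity)
  -- uniform continuity of f
  have hUC : UniformContinuous (⇑f) := CompactSpace.uniformContinuous_of_continuous f.continuous
  obtain ⟨δ', hδ'pos, hδ'⟩ := Metric.uniformContinuous_iff.mp hUC δ1 hδ1
  -- a sequence of distinct periodic points accumulating
  set u := hP.natEmbedding with hudef
  obtain ⟨q, -, φ, hφ, hconv⟩ :=
    isCompact_univ.tendsto_subseq (fun i : ℕ => (mem_univ ((u i : X))))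
  obtain ⟨K, hK⟩ := (Metric.tendsto_atTop.mp hconv) (δ' / 2) (by positivity)
  set v : ℕ → X := fun i => (u (φ (K + i)) : X) with hvdef
  have hv_inj : Function.Injective v := by
    intro i j hij
    have : u (φ (K + i)) = u (φ (K + j)) := Subtype.coe_injective hij
    have := u.injective this
    have := hφ.injective this
    omega
  have hvP : ∀ i, ∃ N : ℕ, 1 ≤ N ∧ (⇑f)^[N] (v i) = v i := fun i => (u (φ (K + i))).2
  have hvq : ∀ i, dist (v i) q < δ' / 2 := fun i => hK (K + i) (le_add_right le_rfl)
  have hvv : ∀ i, dist (v i) (v 0) < δ' := by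
    intro i
    calc dist (v i) (v 0) ≤ dist (v i) q + dist (v 0) q := dist_triangle_right _ _ _
      _ < δ' / 2 + δ' / 2 := add_lt_add (hvq i) (hvq 0)
      _ = δ' := by ring
  -- heteroclinic pseudo-orbits
  set w : ℕ → ℤ → X := fun i k => if k ≤ 0 then iterZ f k (v i) else iterZ f k (v 0)
    with hwdef
  have hpseudo : ∀ i, ∀ k : ℤ, dist (f (w i k)) (w i (k + 1)) < δ1 := by
    intro i k
    by_cases hk : k + 1 ≤ 0
    · have hk0 : k ≤ 0 := by omega
      have : w i (k + 1) = f (w i k) := by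
        simp only [hwdef, if_pos hk, if_pos hk0]
        exact iterZ_succ' f k (v i)
      rw [this, dist_self]; exact hδ1
    · by_cases hk0 : k ≤ 0
      · have hkz : k = 0 := by omega
        have e1 : f (w i k) = f (v i) := by
          have : w i 0 = v i := by
            simp only [hwdef, if_pos (le_refl (0:ℤ))]
            exact iterZ_zero' f (v i)
          rw [hkz, this]
        have e2 : w i (k + 1) = f (v 0) := by
          simp only [hwdef, hkz, if_neg (by omega : ¬ ((0:ℤ) + 1 ≤ 0))]
          rw [show (0:ℤ) + 1 = 0 + 1 by ring, iterZ_succ', iterZ_zero']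
        rw [e1, e2]
        exact hδ' (hvv i)
      · have : w i (k + 1) = f (w i k) := by
          simp only [hwdef, if_neg hk0, if_neg (by omega : ¬ (k + 1 ≤ 0))]
          exact iterZ_succ' f k (v 0)
        rw [this, dist_self]; exact hδ1
  have hz : ∀ i, ∃ z : X, ∀ k : ℤ, dist (iterZ f k z) (w i k) < c / 2 :=
    fun i => hδ1sh (w i) (hpseudo i)
  choose z hz using hz
  -- shadows land in a finite local stable set, pigeonhole
  have fz_mem : ∀ i, f (z i) ∈ localStable f c (f (v 0)) := by
    intro i j
    have e0 : ∀ a : X, (⇑f)^[j] (f a) = iterZ f ((j : ℤ) + 1) a := by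
      intro a
      rw [← Function.iterate_succ_apply, ← iterZ_natCast' f (j + 1) a]
      norm_cast
    rw [e0, e0]
    have hw : w i ((j : ℤ) + 1) = iterZ f ((j : ℤ) + 1) (v 0) := by
      simp only [hwdef, if_neg (by omega : ¬ ((j : ℤ) + 1 ≤ 0))]
    have := hz i ((j : ℤ) + 1)
    rw [hw] at this
    rw [dist_comm]
    linarith
  haveI : Finite ↥(localStable f c (f (v 0))) := (hfin _).to_subtype
  obtain ⟨s0, hs0⟩ := Finite.exists_infinite_fiber
    (fun i : ℕ => (⟨f (z i), fz_mem i⟩ : ↥(localStable f c (f (v 0)))))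
  set fib : Set ℕ := (fun i : ℕ =>
    (⟨f (z i), fz_mem i⟩ : ↥(localStable f c (f (v 0))))) ⁻¹' {s0} with hfibdef
  have hfib : fib.Infinite := Set.infinite_coe_iff.mp hs0
  obtain ⟨i0, hi0⟩ := hfib.nonempty
  have hz_eq : ∀ i ∈ fib, z i = z i0 := by
    intro i hi
    have h1 : f (z i) = f (z i0) := by
      have e1 : (⟨f (z i), fz_mem i⟩ : ↥(localStable f c (f (v 0)))) = s0 := hi
      have e2 : (⟨f (z i0), fz_mem i0⟩ : ↥(localStable f c (f (v 0)))) = s0 := hi0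
      have := e1.trans e2.symm
      exact congrArg Subtype.val this
    exact f.injective h1
  -- backward closeness of the periodic points in the fiber
  have hback : ∀ i ∈ fib, ∀ t : ℕ,
      dist ((⇑f.symm)^[t] (z i0)) ((⇑f.symm)^[t] (v i)) < c / 2 := by
    intro i hi t
    have := hz i (-(t : ℤ))
    have hw : w i (-(t:ℤ)) = (⇑f.symm)^[t] (v i) := by
      simp only [hwdef, if_pos (by omega : -(t:ℤ) ≤ 0)]
      exact iterZ_neg_natCast' f t (v i)
    rw [hw, iterZ_neg_natCast', hz_eq i hi] at this
    exact this
  have hpair : ∀ i ∈ fib, ∀ j ∈ fib, ∀ t : ℕ,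
      dist ((⇑f.symm)^[t] (v i)) ((⇑f.symm)^[t] (v j)) < c := by
    intro i hi j hj t
    calc dist ((⇑f.symm)^[t] (v i)) ((⇑f.symm)^[t] (v j))
        ≤ dist ((⇑f.symm)^[t] (z i0)) ((⇑f.symm)^[t] (v i))
          + dist ((⇑f.symm)^[t] (z i0)) ((⇑f.symm)^[t] (v j)) := dist_triangle_left _ _ _
      _ < c / 2 + c / 2 := add_lt_add (hback i hi t) (hback j hj t)
      _ = c := by ring
  -- periodicity converts backward closeness to forward closeness
  have key : ∀ j ∈ fib, v j ∈ localStable f c (v i0) := by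
    intro j hj t
    obtain ⟨Ni, hNi1, hNi⟩ := hvP i0
    obtain ⟨Nj, hNj1, hNj⟩ := hvP j
    set N : ℕ := Ni * Nj with hNdef
    have hN1 : 1 ≤ N := Nat.one_le_iff_ne_zero.mpr (by positivity)
    have hfixi : (⇑f)^[N] (v i0) = v i0 := by
      rw [hNdef, Function.iterate_mul]
      exact Function.iterate_fixed hNi Nj
    have hfixj : (⇑f)^[N] (v j) = v j := by
      rw [hNdef, mul_comm, Function.iterate_mul]
      exact Function.iterate_fixed hNj Ni
    set s : ℕ := (N - 1) * t with hsdef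
    have hst : s + t = N * t := by
      have h1 : t ≤ N * t := Nat.le_mul_of_pos_left t (by omega)
      rw [hsdef, Nat.sub_mul, one_mul]
      omega
    rw [iterate_eq_symm_iterate' f hfixi t s hst, iterate_eq_symm_iterate' f hfixj t s hst]
    exact (hpair i0 hi0 j hj s).le
  -- contradiction with finiteness of the local stable set
  have himg : (v '' fib).Infinite := hfib.image (hv_inj.injOn)
  have hsub : v '' fib ⊆ localStable f c (v i0) := by
    rintro y ⟨j, hj, rfl⟩
    exact key j hj
  exact himg ((hfin (v i0)).subset hsub)

end AuxPeriodicProof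


private lemma periodic_dense' [CompactSpace X] {c : ℝ} (hc : 0 < c) (f : X ≃ₜ X)
    (hfin : ∀ x : X, (localStable f c x).Finite) (hsh : Shadowing f)
    (x : X) {ε : ℝ} (hε : 0 < ε) :
    ∃ p : X, (∃ N : ℕ, 1 ≤ N ∧ (⇑f)^[N] p = p) ∧ dist x p < ε := by
  set ε0 : ℝ := min ε (c / 2) with hε0def
  have hε0 : 0 < ε0 := lt_min hε (by positivity)
  obtain ⟨δ, hδ, hδsh⟩ := hsh ε0 hε0
  -- find a near-return of the forward orbit
  obtain ⟨L, -, φ, hφ, hconv⟩ :=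
    isCompact_univ.tendsto_subseq (fun i : ℕ => (mem_univ ((⇑f)^[i] x)))
  obtain ⟨K, hK⟩ := (Metric.tendsto_atTop.mp hconv) (δ / 2) (by positivity)
  set n : ℕ := φ K with hndef
  set m : ℕ := φ (K + 1) with hmdef
  have hnm : n < m := hφ (lt_add_one K)
  have hreturn : dist ((⇑f)^[m] x) ((⇑f)^[n] x) < δ := by
    have h1 := hK K le_rfl
    have h2 := hK (K + 1) (le_add_right le_rfl)
    calc dist ((⇑f)^[m] x) ((⇑f)^[n] x)
        ≤ dist ((⇑f)^[m] x) L + dist ((⇑f)^[n] x) L := dist_triangle_right _ _ _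
      _ < δ / 2 + δ / 2 := add_lt_add h2 h1
      _ = δ := by ring
  set T : ℤ := (m : ℤ) - n with hTdef
  have hT : 1 ≤ T := by omega
  have hTpos : (0:ℤ) < T := by omega
  set w : ℤ → X := fun k => if k < (m : ℤ) then iterZ f k x
      else iterZ f ((n : ℤ) + (k - n) % T) x with hwdef
  -- pseudo-orbit property
  have hpseudo : ∀ k : ℤ, dist (f (w k)) (w (k + 1)) < δ := by
    intro k
    by_cases hk1 : k + 1 < (m : ℤ)
    · have hk : k < (m : ℤ) := by omega
      have : w (k + 1) = f (w k) := by
        simp only [hwdef, if_pos hk, if_pos hk1]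
        exact iterZ_succ' f k x
      rw [this, dist_self]; exact hδ
    · by_cases hk : k < (m : ℤ)
      · have hkm : k + 1 = (m : ℤ) := by omega
        have e1 : f (w k) = (⇑f)^[m] x := by
          simp only [hwdef, if_pos hk]
          rw [← iterZ_succ' f k x, hkm, iterZ_natCast']
        have e2 : w (k + 1) = (⇑f)^[n] x := by
          simp only [hwdef, hkm, if_neg (lt_irrefl (m : ℤ))]
          rw [show ((m:ℤ) - n) % T = 0 by rw [hTdef]; exact Int.emod_self,
            add_zero, iterZ_natCast']
        rw [e1, e2]; exact hreturn
      · -- k ≥ m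
        push_neg at hk
        set r : ℤ := (k - n) % T with hrdef
        have hr0 : 0 ≤ r := Int.emod_nonneg _ (by omega)
        have hrT : r < T := Int.emod_lt_of_pos _ hTpos
        have hwk : f (w k) = iterZ f ((n : ℤ) + r + 1) x := by
          simp only [hwdef, if_neg (not_lt.mpr hk)]
          rw [← iterZ_succ' f]
        have hq : ∃ q : ℤ, k - n = r + T * q := by
          have hdm := Int.mul_ediv_add_emod (k - (n:ℤ)) T
          exact ⟨(k - n) / T, by omega⟩
        obtain ⟨q, hqe⟩ := hq
        have hr' : (k + 1 - n) % T = (r + 1) % T := by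
          have : k + 1 - n = (r + 1) + T * q := by omega
          rw [this, Int.add_mul_emod_self_left]
        by_cases hrr : r + 1 < T
        · have : w (k + 1) = iterZ f ((n : ℤ) + r + 1) x := by
            simp only [hwdef, if_neg (by omega : ¬ (k + 1 < (m:ℤ)))]
            rw [hr', Int.emod_eq_of_lt (by omega) hrr, add_assoc]
          rw [hwk, this, dist_self]; exact hδ
        · have hrT' : r + 1 = T := by omega
          have e1 : f (w k) = (⇑f)^[m] x := by
            rw [hwk, show (n:ℤ) + r + 1 = (m:ℤ) by omega, iterZ_natCast']
          have e2 : w (k + 1) = (⇑f)^[n] x := by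
            simp only [hwdef, if_neg (by omega : ¬ (k + 1 < (m:ℤ)))]
            rw [hr', hrT', Int.emod_self, add_zero, iterZ_natCast']
          rw [e1, e2]; exact hreturn
  -- eventual periodicity
  have hper : ∀ k : ℤ, (n : ℤ) ≤ k → w (k + T) = w k := by
    intro k hk
    have hkT : ¬ (k + T < (m : ℤ)) := by omega
    by_cases hkm : k < (m : ℤ)
    · have : (k + T - n) % T = k - n := by
        rw [show k + T - n = (k - n) + T * 1 by ring, Int.add_mul_emod_self_left,
          Int.emod_eq_of_lt (by omega) (by omega)]
      simp only [hwdef, if_neg hkT, if_pos hkm, this]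
      rw [show (n : ℤ) + (k - n) = k by ring]
    · have : (k + T - n) % T = (k - n) % T := by
        rw [show k + T - n = (k - n) + T * 1 by ring, Int.add_mul_emod_self_left]
      simp only [hwdef, if_neg hkT, if_neg hkm, this]
  obtain ⟨z, hz⟩ := hδsh w hpseudo
  obtain ⟨N, hN1, hNz⟩ := shadow_periodic' f hfin z w n T (by positivity) hT hper
    (fun k => le_trans (hz k).le (le_trans (min_le_right _ _) le_rfl))
  refine ⟨z, ⟨N, hN1, hNz⟩, ?_⟩
  have h0 := hz 0
  rw [iterZ_zero'] at h0
  have hw0 : w 0 = x := by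
    simp only [hwdef, if_pos (by omega : (0:ℤ) < (m:ℤ))]
    exact iterZ_zero' f x
  rw [hw0] at h0
  calc dist x z = dist z x := dist_comm x z
    _ < ε0 := h0
    _ ≤ ε := min_le_left _ _



/-- positive finite-expansivity plus shadowing force the space
to be finite. -/
theorem finite_of_posFiniteExpansive_shadowing [CompactSpace X] (f : X ≃ₜ X)
    (hfe : ∃ c > (0:ℝ), ∀ x : X, (localStable f c x).Finite)
    (hsh : Shadowing f) : Finite X := by
  obtain ⟨c, hc, hfin⟩ := hfe
  have hPfin := periodic_finite' hc f hfin hsh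
  have hdense : ∀ x : X, x ∈ {p : X | ∃ N : ℕ, 1 ≤ N ∧ (⇑f)^[N] p = p} := by
    intro x
    have hcl : x ∈ closure {p : X | ∃ N : ℕ, 1 ≤ N ∧ (⇑f)^[N] p = p} := by
      rw [Metric.mem_closure_iff]
      intro ε hε
      obtain ⟨p, hpP, hpd⟩ := periodic_dense' hc f hfin hsh x hε
      exact ⟨p, hpP, hpd⟩
    rwa [hPfin.isClosed.closure_eq] at hcl
  have huniv : (Set.univ : Set X).Finite := hPfin.subset (fun x _ => hdense x)
  exact Set.finite_univ_iff.mp huniv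
end
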